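/- Let G be a group whose group algebra ℂ[G] is left Noetherian, acting freely with finitely many orbits on a locally finite graph Γ preserving edges, and let λ be an eigenvalue of the Laplacian Δ. Then there exist finitely many finite-support λ-eigenfunctions f^{(1)}, ..., f^{(r)} such that every finite-support λ-eigenfunction of Δ is a finite ℂ-linear combination of G-translates of f^{(1)}, ..., f^{(r)}. -/

import Mathlib

/-- The normalized discrete Laplacian of a locally finite graph. -/
noncomputable def graphLaplacian {V : Type*} (Γ : SimpleGraph V) [Γ.LocallyFinite]
    (f : V → ℂ) (v : V) : ℂ :=
  (1 / (Real.sqrt (Γ.degree v) : ℂ)) *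
    ∑ w ∈ Γ.neighborFinset v,
      (f w / (Real.sqrt (Γ.degree w) : ℂ) - f v / (Real.sqrt (Γ.degree v) : ℂ))

set_option linter.unusedSectionVars false

section Aux

variable {G V : Type*} [Group G] [MulAction G V] [DecidableEq V]
    (Γ : SimpleGraph V) [Γ.LocallyFinite]
    (hedge : ∀ (g : G) (u v : V), Γ.Adj u v → Γ.Adj (g • u) (g • v))

include hedge

lemma aux_adj_iff (g : G) (u v : V) : Γ.Adj (g • u) (g • v) ↔ Γ.Adj u v := by
  constructor
  · intro h
    have := hedge g⁻¹ _ _ h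
    simpa using this
  · exact hedge g u v

lemma aux_nbr (g : G) (v : V) :
    Γ.neighborFinset (g • v) = (Γ.neighborFinset v).image (g • ·) := by
  ext w
  simp only [SimpleGraph.mem_neighborFinset, Finset.mem_image]
  constructor
  · intro h
    exact ⟨g⁻¹ • w, by rwa [← aux_adj_iff Γ hedge g, smul_inv_smul], smul_inv_smul g w⟩
  · rintro ⟨u, hu, rfl⟩
    exact (aux_adj_iff Γ hedge g v u).2 hu

lemma aux_deg (g : G) (v : V) : Γ.degree (g • v) = Γ.degree v := by
  rw [← SimpleGraph.card_neighborFinset_eq_degree, ← SimpleGraph.card_neighborFinset_eq_degree,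
    aux_nbr Γ hedge, Finset.card_image_of_injective _ (MulAction.injective g)]

lemma aux_equiv (g : G) (f : V → ℂ) :
    graphLaplacian Γ (fun v => f (g⁻¹ • v)) = fun v => graphLaplacian Γ f (g⁻¹ • v) := by
  have key : ∀ u : V, graphLaplacian Γ (fun x => f (g⁻¹ • x)) (g • u) = graphLaplacian Γ f u := by
    intro u
    unfold graphLaplacian
    rw [aux_deg Γ hedge, aux_nbr Γ hedge,
      Finset.sum_image (fun a _ b _ h => MulAction.injective g h)]
    simp [aux_deg Γ hedge, inv_smul_smul]
  funext v
  have := key (g⁻¹ • v)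
  rwa [smul_inv_smul] at this

end Aux

section Lin

variable {V : Type*} (Γ : SimpleGraph V) [Γ.LocallyFinite]

lemma lap_add (f h : V → ℂ) :
    graphLaplacian Γ (f + h) = graphLaplacian Γ f + graphLaplacian Γ h := by
  funext v
  simp only [graphLaplacian, Pi.add_apply, Finset.mul_sum]
  rw [← Finset.sum_add_distrib]
  exact Finset.sum_congr rfl fun w _ => by ring

lemma lap_smul (c : ℂ) (f : V → ℂ) :
    graphLaplacian Γ (c • f) = c • graphLaplacian Γ f := by
  funext v
  simp only [graphLaplacian, Pi.smul_apply, smul_eq_mul, Finset.mul_sum]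
  exact Finset.sum_congr rfl fun w _ => by ring

lemma lap_zero : graphLaplacian Γ (0 : V → ℂ) = 0 := by
  funext v
  simp [graphLaplacian]

end Lin

theorem noetherian_group_algebra_finitely_many_finite_support_eigenfunctions
    {G V : Type*} [Group G] [MulAction G V]
    (Γ : SimpleGraph V) [Γ.LocallyFinite]
    -- the group algebra ℂ[G] is left Noetherian
    (hNoeth : IsNoetherianRing (MonoidAlgebra ℂ G))
    -- the action is free
    (hfree : ∀ (g : G) (v : V), g • v = v → g = 1)
    -- the action preserves edges
    (hedge : ∀ (g : G) (u v : V), Γ.Adj u v → Γ.Adj (g • u) (g • v))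
    -- finitely many orbits, with fundamental domain W
    (W : Finset V) (hW : ∀ v : V, ∃ w ∈ W, ∃ g : G, g • w = v)
    -- λ is an eigenvalue of Δ on ℓ²(V)
    (lam : ℂ) (hlam : ∃ f : V → ℂ, Memℓp f 2 ∧ f ≠ 0 ∧ graphLaplacian Γ f = lam • f) :
    ∃ (r : ℕ) (F : Fin r → (V → ℂ)),
      (∀ i, F i ≠ 0 ∧ (Function.support (F i)).Finite ∧
          graphLaplacian Γ (F i) = lam • F i) ∧
      ∀ f : V → ℂ, (Function.support f).Finite → f ≠ 0 →
        graphLaplacian Γ f = lam • f →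
        f ∈ Submodule.span ℂ
          {h : V → ℂ | ∃ (i : Fin r) (g : G), h = fun v => F i (g⁻¹ • v)} := by
  classical
  set ρ := Representation.ofMulAction ℂ G V with hρdef
  have smul_def : ∀ (r : MonoidAlgebra ℂ G) (x : ρ.asModule),
      ρ.asModuleEquiv (r • x) = ρ.asAlgebraHom r (ρ.asModuleEquiv x) := fun r x =>
    ρ.asModuleEquiv_map_smul r x
  have rho_coe : ∀ (g : G) (p : MonoidAlgebra ℂ V), ⇑(ρ g p).coeff = fun v => p.coeff (g⁻¹ • v) := by
    intro g p
    funext v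
    exact Representation.coeff_ofMulAction g p v
  have rho_single : ∀ (g : G) (w : V) (c : ℂ),
      ρ g (MonoidAlgebra.single w c) = MonoidAlgebra.single (g • w) c := fun g w c =>
    Representation.ofMulAction_single g w c
  -- translates of eigen finsupps are eigen
  have heig_rho : ∀ (g : G) (p : MonoidAlgebra ℂ V), graphLaplacian Γ ⇑p.coeff = lam • ⇑p.coeff →
      graphLaplacian Γ ⇑(ρ g p).coeff = lam • ⇑(ρ g p).coeff := by
    intro g p hp
    rw [rho_coe g p, aux_equiv Γ hedge g ⇑p.coeff, hp]
    funext v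
    simp
  -- the eigen space as a MonoidAlgebra submodule
  let D : Submodule (MonoidAlgebra ℂ G) ρ.asModule :=
    { carrier := {p : ρ.asModule |
        graphLaplacian Γ ⇑(ρ.asModuleEquiv p).coeff = lam • ⇑(ρ.asModuleEquiv p).coeff}
      add_mem' := by
        intro a b ha hb
        simp only [Set.mem_setOf_eq] at *
        rw [map_add, MonoidAlgebra.coeff_add, Finsupp.coe_add, lap_add, ha, hb, smul_add]
      zero_mem' := by
        simp only [Set.mem_setOf_eq]
        rw [map_zero, MonoidAlgebra.coeff_zero, Finsupp.coe_zero, lap_zero, smul_zero]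
      smul_mem' := by
        intro a p hp
        simp only [Set.mem_setOf_eq] at *
        rw [smul_def a p]
        induction a using MonoidAlgebra.induction_on with
        | of g =>
          rw [Representation.asAlgebraHom_of]
          exact heig_rho g _ hp
        | add a b ha hb =>
          rw [map_add, LinearMap.add_apply, MonoidAlgebra.coeff_add, Finsupp.coe_add, lap_add, ha, hb, smul_add]
        | smul c a ha =>
          rw [map_smul, LinearMap.smul_apply, MonoidAlgebra.coeff_smul, Finsupp.coe_smul, lap_smul, ha, smul_comm] }
  -- generators of the whole module
  let gens : Finset ρ.asModule := W.image (fun w => ρ.asModuleEquiv.symm (MonoidAlgebra.single w 1))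
  have hsingle : ∀ (v : V) (c : ℂ), ρ.asModuleEquiv.symm (MonoidAlgebra.single v c) ∈
      Submodule.span (MonoidAlgebra ℂ G) (↑gens : Set ρ.asModule) := by
    intro v c
    obtain ⟨w, hw, g, hg⟩ := hW v
    have hmem : ρ.asModuleEquiv.symm (MonoidAlgebra.single w 1) ∈ (↑gens : Set ρ.asModule) := by
      simp only [gens, Finset.coe_image, Set.mem_image, Finset.mem_coe]
      exact ⟨w, hw, rfl⟩
    have hsm := Submodule.smul_mem
      (Submodule.span (MonoidAlgebra ℂ G) (↑gens : Set ρ.asModule))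
      (MonoidAlgebra.single g c : MonoidAlgebra ℂ G) (Submodule.subset_span hmem)
    have heq : (MonoidAlgebra.single g c : MonoidAlgebra ℂ G) •
        ρ.asModuleEquiv.symm (MonoidAlgebra.single w 1) =
        ρ.asModuleEquiv.symm (MonoidAlgebra.single v c) := by
      apply ρ.asModuleEquiv.injective
      rw [smul_def, LinearEquiv.apply_symm_apply, LinearEquiv.apply_symm_apply,
        Representation.asAlgebraHom_single, LinearMap.smul_apply, rho_single, hg,
        MonoidAlgebra.smul_single, smul_eq_mul, mul_one]
    rwa [heq] at hsm
  have hall : ∀ q : MonoidAlgebra ℂ V, ρ.asModuleEquiv.symm q ∈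
      Submodule.span (MonoidAlgebra ℂ G) (↑gens : Set ρ.asModule) := by
    intro q
    induction q using MonoidAlgebra.induction with
    | zero => rw [map_zero]; exact Submodule.zero_mem _
    | single_add v c p _ _ ih =>
      rw [map_add]
      exact Submodule.add_mem _ (hsingle v c) ih
  have hfin : Module.Finite (MonoidAlgebra ℂ G) ρ.asModule :=
    ⟨⟨gens, eq_top_iff.2 (fun p _ => by
      have := hall (ρ.asModuleEquiv p)
      rwa [LinearEquiv.symm_apply_apply] at this)⟩⟩
  have hNoethM : IsNoetherian (MonoidAlgebra ℂ G) ρ.asModule :=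
    isNoetherian_of_isNoetherianRing_of_finite _ _
  obtain ⟨s, hs⟩ := (IsNoetherian.noetherian D : D.FG)
  -- remove zero generators
  let t : Finset ρ.asModule := s.filter (fun x => x ≠ 0)
  have hts : Submodule.span (MonoidAlgebra ℂ G) (↑t : Set ρ.asModule) = D := by
    rw [← hs]
    apply le_antisymm
    · exact Submodule.span_mono (Finset.coe_subset.2 (Finset.filter_subset _ s))
    · have hsub : (↑s : Set ρ.asModule) ⊆ insert 0 (↑t : Set ρ.asModule) := by
        intro x hx
        by_cases hx0 : x = 0
        · rw [hx0]; exact Set.mem_insert 0 _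
        · exact Set.mem_insert_of_mem _
            (Finset.mem_coe.2 (Finset.mem_filter.2 ⟨Finset.mem_coe.1 hx, hx0⟩))
      calc Submodule.span (MonoidAlgebra ℂ G) (↑s : Set ρ.asModule)
          ≤ Submodule.span (MonoidAlgebra ℂ G) (insert 0 (↑t : Set ρ.asModule)) :=
            Submodule.span_mono hsub
        _ = Submodule.span (MonoidAlgebra ℂ G) (↑t : Set ρ.asModule) :=
            Submodule.span_insert_zero
  have htD : ∀ x ∈ t, x ∈ D := fun x hx => hts ▸ Submodule.subset_span hx
  -- the family
  let e := t.equivFin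
  let Ffam : Fin t.card → (V → ℂ) := fun i => ⇑(ρ.asModuleEquiv ((e.symm i : t) : ρ.asModule)).coeff
  refine ⟨t.card, Ffam, ?_, ?_⟩
  · intro i
    have hmem := (e.symm i).2
    have hD := htD _ hmem
    refine ⟨?_, (ρ.asModuleEquiv ((e.symm i : t) : ρ.asModule)).coeff.finite_support, hD⟩
    intro hzero
    have hz : ((e.symm i : t) : ρ.asModule) = 0 := by
      apply ρ.asModuleEquiv.injective
      rw [map_zero]
      exact congrArg MonoidAlgebra.ofCoeff (DFunLike.coe_injective hzero)
    exact (Finset.mem_filter.1 hmem).2 hz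
  · intro f hf hne heig
    set T := Submodule.span ℂ
      {h : V → ℂ | ∃ (i : Fin t.card) (g : G), h = fun v => Ffam i (g⁻¹ • v)} with hT
    -- T is invariant under translation
    have Tinv : ∀ (g : G), ∀ h ∈ T, (fun v => h (g⁻¹ • v)) ∈ T := by
      intro g h hh
      induction hh using Submodule.span_induction with
      | mem x hx =>
        obtain ⟨i, g', rfl⟩ := hx
        apply Submodule.subset_span
        exact ⟨i, g * g', by funext v; rw [mul_inv_rev, mul_smul]⟩
      | zero => exact Submodule.zero_mem T
      | add x y hx hy ihx ihy =>
        have hxy : (fun v => (x + y) (g⁻¹ • v)) =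
            (fun v => x (g⁻¹ • v)) + fun v => y (g⁻¹ • v) := by funext v; simp
        rw [hxy]; exact Submodule.add_mem _ ihx ihy
      | smul c x hx ihx =>
        have hcx : (fun v => (c • x) (g⁻¹ • v)) = c • fun v => x (g⁻¹ • v) := by funext v; simp
        rw [hcx]; exact Submodule.smul_mem _ _ ihx
    -- every element of the MonoidAlgebra span has coercion in T
    have main : ∀ x ∈ Submodule.span (MonoidAlgebra ℂ G) (↑t : Set ρ.asModule),
        ⇑(ρ.asModuleEquiv x).coeff ∈ T := by
      intro x hx
      induction hx using Submodule.span_induction with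
      | mem x hx =>
        apply Submodule.subset_span
        refine ⟨e ⟨x, hx⟩, 1, ?_⟩
        funext v
        simp only [Ffam, Equiv.symm_apply_apply, inv_one, one_smul]
      | zero =>
        rw [map_zero, MonoidAlgebra.coeff_zero, Finsupp.coe_zero]
        exact Submodule.zero_mem T
      | add x y hx hy ihx ihy =>
        rw [map_add, MonoidAlgebra.coeff_add, Finsupp.coe_add]
        exact Submodule.add_mem _ ihx ihy
      | smul a x hx ihx =>
        rw [smul_def]
        induction a using MonoidAlgebra.induction_on with
        | of g =>
          rw [Representation.asAlgebraHom_of, rho_coe]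
          exact Tinv g _ ihx
        | add a b ha hb =>
          rw [map_add, LinearMap.add_apply, MonoidAlgebra.coeff_add, Finsupp.coe_add]
          exact Submodule.add_mem _ ha hb
        | smul c a ha =>
          rw [map_smul, LinearMap.smul_apply, MonoidAlgebra.coeff_smul, Finsupp.coe_smul]
          exact Submodule.smul_mem _ _ ha
    have hp : ρ.asModuleEquiv.symm (MonoidAlgebra.ofCoeff (Finsupp.ofSupportFinite f hf)) ∈
        Submodule.span (MonoidAlgebra ℂ G) (↑t : Set ρ.asModule) := by
      rw [hts]
      show graphLaplacian Γ ⇑(ρ.asModuleEquiv (ρ.asModuleEquiv.symm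
          (MonoidAlgebra.ofCoeff (Finsupp.ofSupportFinite f hf)))).coeff = _
      rw [LinearEquiv.apply_symm_apply, MonoidAlgebra.coeff_ofCoeff, Finsupp.ofSupportFinite_coe]
      exact heig
    have hmain := main _ hp
    rwa [LinearEquiv.apply_symm_apply, MonoidAlgebra.coeff_ofCoeff, Finsupp.ofSupportFinite_coe] at hmain
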